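/- arXiv:1511.00144 — 3 statements merged into one kernel-verified Lean document; each statement's English description precedes it below -/
import Mathlib

section
/- For every integer t ≥ 1, the family of sets 𝒮(γ), where γ ranges over the reduced elements of Γ^t, forms a partition of the symmetric group on {0,1,…,t}: every permutation σ of {0,1,…,t} belongs to 𝒮(γ) for exactly one reduced element γ of Γ^t. -/
/-!
Combinatorics of `Γ^t` (Boyer, "Le lemme d'Ihara pour les groupes unitaires").
Signs `{+,−}` are encoded as `Bool`, with `true = +` and `false = −`.
-/

/-- Membership in `Γ^t`: a nonempty sequence whose entries `aᵢ` sum to `t`. -/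
def InGamma (t : ℕ) (l : List (ℕ × Bool)) : Prop :=
  l ≠ [] ∧ (l.map Prod.fst).sum = t

/-- A sequence is reduced if all its entries `aᵢ` are strictly positive and
consecutive signs alternate. -/
def GammaReduced (l : List (ℕ × Bool)) : Prop :=
  (∀ p ∈ l, 0 < p.1) ∧ l.Chain' (fun p q => p.2 ≠ q.2)

/-- Partial sums: `partialSum l i = a₁ + ⋯ + aᵢ` (so `partialSum l 0 = 0`). -/
def partialSum (l : List (ℕ × Bool)) (i : ℕ) : ℕ :=
  ((l.take i).map Prod.fst).sum

/-- The set `𝒮(γ)` of permutations `σ` of `{0,1,…,t}` such that for every block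
`1 ≤ i ≤ r` and all `s_{i-1} ≤ k < k' ≤ s_i`, one has `σ⁻¹(k) < σ⁻¹(k')` if `εᵢ = +`
and `σ⁻¹(k) > σ⁻¹(k')` if `εᵢ = −`.  (Blocks are indexed from `0` here.) -/
def ScriptS (t : ℕ) (l : List (ℕ × Bool)) : Set (Equiv.Perm (Fin (t + 1))) :=
  {σ | ∀ i (hi : i < l.length), ∀ k k' : Fin (t + 1),
    partialSum l i ≤ (k : ℕ) → (k : ℕ) < (k' : ℕ) → (k' : ℕ) ≤ partialSum l (i + 1) →
    if (l.get ⟨i, hi⟩).2 = true then σ⁻¹ k < σ⁻¹ k' else σ⁻¹ k' < σ⁻¹ k}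

/-- The set `𝒮^op(γ)`, defined by the same condition as `𝒮(γ)` with both inequalities
on `σ⁻¹` reversed. -/
def ScriptSop (t : ℕ) (l : List (ℕ × Bool)) : Set (Equiv.Perm (Fin (t + 1))) :=
  {σ | ∀ i (hi : i < l.length), ∀ k k' : Fin (t + 1),
    partialSum l i ≤ (k : ℕ) → (k : ℕ) < (k' : ℕ) → (k' : ℕ) ≤ partialSum l (i + 1) →
    if (l.get ⟨i, hi⟩).2 = true then σ⁻¹ k' < σ⁻¹ k else σ⁻¹ k < σ⁻¹ k'}

/-!
Letter `k` of the ascent word of `σ⁻¹` records whether `σ⁻¹ k < σ⁻¹ (k + 1)`. Since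
comparisons of neighbours inside a block propagate to all pairs of the block, `σ ∈ 𝒮(γ)` iff
the word `ε₁^{a₁} ⋯ ε_r^{a_r}` obtained by expanding `γ` is the ascent word of `σ⁻¹`.
Expansion is a bijection from reduced sequences onto words, with inverse run-length
encoding (`List.splitBy` into maximal constant runs); so `γ` is forced to be the run-length
encoding of the ascent word of `σ⁻¹`, which is nonempty because that word has length `t ≥ 1`.
-/

open List

def expandRuns (l : List (ℕ × Bool)) : List Bool :=
  l.flatMap fun p => replicate p.1 p.2

def runLengthEncode (w : List Bool) : List (ℕ × Bool) :=
  (w.splitBy (· == ·)).map fun g => (g.length, g.headD false)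

lemma length_expandRuns (l : List (ℕ × Bool)) :
    (expandRuns l).length = (l.map Prod.fst).sum := by
  simp [expandRuns, length_flatMap]

lemma expandRuns_eq_flatten (l : List (ℕ × Bool)) :
    expandRuns l = (l.map fun p => replicate p.1 p.2).flatten := by
  simp [expandRuns, flatMap_def]

lemma exists_eq_replicate_of_mem_splitBy {w g : List Bool} (hg : g ∈ w.splitBy (· == ·)) :
    ∃ n b, g = replicate (n + 1) b := by
  obtain ⟨b, g, rfl⟩ := exists_cons_of_ne_nil (ne_nil_of_mem_splitBy hg)
  have hchain := isChain_of_mem_splitBy hg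
  simp only [beq_iff_eq, isChain_cons_eq_iff_eq_replicate] at hchain
  exact ⟨g.length, b, by rw [replicate_succ, ← hchain]⟩

lemma expandRuns_runLengthEncode (w : List Bool) : expandRuns (runLengthEncode w) = w := by
  rw [expandRuns_eq_flatten, runLengthEncode, map_map]
  conv_rhs => rw [← flatten_splitBy (· == ·) w]
  congr 1
  refine (map_congr_left fun g hg => ?_).trans (map_id _)
  obtain ⟨n, b, rfl⟩ := exists_eq_replicate_of_mem_splitBy hg
  simp [replicate_succ]

lemma gammaReduced_runLengthEncode (w : List Bool) : GammaReduced (runLengthEncode w) := by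
  refine ⟨?_, ?_⟩
  · simp only [runLengthEncode, mem_map]
    rintro _ ⟨g, hg, rfl⟩
    exact length_pos_of_ne_nil (ne_nil_of_mem_splitBy hg)
  · rw [runLengthEncode, List.Chain', isChain_map]
    refine (isChain_getLast_head_splitBy _ w).imp_of_mem_imp ?_
    rintro g g' hg hg' ⟨_, _, hboundary⟩
    obtain ⟨n, b, rfl⟩ := exists_eq_replicate_of_mem_splitBy hg
    obtain ⟨n', b', rfl⟩ := exists_eq_replicate_of_mem_splitBy hg'
    simpa [head?_replicate] using hboundary

lemma runLengthEncode_expandRuns {l : List (ℕ × Bool)} (hl : GammaReduced l) :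
    runLengthEncode (expandRuns l) = l := by
  obtain ⟨hpos, halt⟩ := hl
  rw [expandRuns_eq_flatten, runLengthEncode, splitBy_flatten, map_map]
  · refine (map_congr_left fun ⟨a, ε⟩ hp => ?_).trans (map_id _)
    obtain ⟨n, rfl⟩ : ∃ n, a = n + 1 := Nat.exists_eq_add_one.mpr (hpos _ hp)
    simp [replicate_succ]
  · simp only [mem_map, not_exists, not_and]
    exact fun p hp h => (hpos p hp).ne' ((replicate_eq_nil_iff _).mp h)
  · simp only [mem_map]
    rintro _ ⟨p, -, rfl⟩
    exact isChain_replicate_of_rel _ (beq_self_eq_true p.2)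
  · rw [isChain_map]
    refine halt.imp_of_mem_imp fun p q hp hq hpq =>
      ⟨by simpa using (hpos p hp).ne', by simpa using (hpos q hq).ne', by simpa using hpq⟩

theorem existsUnique_gammaReduced_expandRuns_eq (w : List Bool) :
    ∃! l, GammaReduced l ∧ expandRuns l = w :=
  ⟨runLengthEncode w, ⟨gammaReduced_runLengthEncode w, expandRuns_runLengthEncode w⟩,
    fun _ ⟨hl, hw⟩ => hw ▸ (runLengthEncode_expandRuns hl).symm⟩

section Ascents

variable {α : Type*} [LinearOrder α] {n : ℕ}

def ascentWord (f : Fin (n + 1) → α) : List Bool :=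
  ofFn fun j : Fin n => decide (f j.castSucc < f j.succ)

lemma length_ascentWord (f : Fin (n + 1) → α) : (ascentWord f).length = n :=
  length_ofFn

lemma getElem?_ascentWord (f : Fin (n + 1) → α) (j : Fin n) :
    (ascentWord f)[(j : ℕ)]? = some (decide (f j.castSucc < f j.succ)) := by
  simp [ascentWord]

lemma decide_lt_eq_of_ascentWord {f : Fin (n + 1) → α} (hf : Function.Injective f)
    {a b : ℕ} {ε : Bool} (h : ∀ j, a ≤ j → j < b → (ascentWord f)[j]? = some ε)
    {k k' : Fin (n + 1)} (hak : a ≤ k) (hkk' : k < k') (hk'b : (k' : ℕ) ≤ b) :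
    decide (f k < f k') = ε := by
  set s : Set (Fin (n + 1)) := Fin.val ⁻¹' Set.Icc a b
  have hs : s.OrdConnected := ⟨fun _ hx _ hy _ hz =>
    ⟨hx.1.trans (Fin.le_def.mp hz.1), (Fin.le_def.mp hz.2).trans hy.2⟩⟩
  have hstep : ∀ x, ¬ IsMax x → x ∈ s → Order.succ x ∈ s →
      decide (f x < f (Order.succ x)) = ε := by
    intro x hx hxs hsx
    obtain ⟨j, rfl⟩ := Fin.exists_castSucc_eq.mpr (by simpa [Fin.top_eq_last] using hx)
    rw [Fin.orderSucc_castSucc] at hsx ⊢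
    simpa [getElem?_ascentWord] using h j hxs.1 (by simpa using hsx.2)
  have hk : k ∈ s := ⟨hak, by omega⟩
  have hk' : k' ∈ s := ⟨by omega, hk'b⟩
  cases ε
  · refine decide_eq_false (not_lt.mpr (strictAntiOn_of_succ_lt hs ?_ hk hk' hkk').le)
    intro x hx hxs hsx
    exact lt_of_le_of_ne (not_lt.mp (of_decide_eq_false (hstep x hx hxs hsx)))
      (hf.ne (Order.lt_succ_of_not_isMax hx).ne')
  · refine decide_eq_true (strictMonoOn_of_lt_succ hs ?_ hk hk' hkk')
    exact fun x hx hxs hsx => of_decide_eq_true (hstep x hx hxs hsx)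

end Ascents

lemma partialSum_cons_succ (p : ℕ × Bool) (l : List (ℕ × Bool)) (i : ℕ) :
    partialSum (p :: l) (i + 1) = p.1 + partialSum l i := by
  simp [partialSum]

lemma exists_partialSum_le_lt (l : List (ℕ × Bool)) {k : ℕ} (hk : k < (l.map Prod.fst).sum) :
    ∃ i < l.length, partialSum l i ≤ k ∧ k < partialSum l (i + 1) := by
  induction l generalizing k with
  | nil => simp at hk
  | cons p l ih =>
    by_cases hkp : k < p.1
    · exact ⟨0, by simp, by simp [partialSum], by simpa [partialSum_cons_succ, partialSum]⟩
    · obtain ⟨i, hi, hik, hki⟩ := ih (k := k - p.1) (by simp only [map_cons, sum_cons] at hk; omega)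
      exact ⟨i + 1, by simpa using hi, by rw [partialSum_cons_succ]; omega,
        by rw [partialSum_cons_succ]; omega⟩

lemma getElem?_expandRuns {l : List (ℕ × Bool)} {i k : ℕ} (hi : i < l.length)
    (hik : partialSum l i ≤ k) (hki : k < partialSum l (i + 1)) :
    (expandRuns l)[k]? = some (l.get ⟨i, hi⟩).2 := by
  induction l generalizing i k with
  | nil => simp at hi
  | cons p l ih =>
    have hexpand : expandRuns (p :: l) = replicate p.1 p.2 ++ expandRuns l := by
      simp [expandRuns]
    rw [hexpand]
    cases i with
    | zero =>
      have hkp : k < p.1 := by simpa [partialSum] using hki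
      rw [getElem?_append_left (by simpa using hkp)]
      simp [hkp]
    | succ i =>
      rw [partialSum_cons_succ] at hik hki
      rw [getElem?_append_right (by simp; omega), length_replicate]
      exact ih (Nat.lt_of_succ_lt_succ hi) (by omega) (by omega)

lemma ite_lt_iff_decide_lt_eq {α : Type*} [LinearOrder α] {x y : α} (hxy : x ≠ y) (ε : Bool) :
    (if ε = true then x < y else y < x) ↔ decide (x < y) = ε := by
  cases ε <;> simp [hxy.symm.le_iff_lt]

theorem mem_ScriptS_iff {t : ℕ} {l : List (ℕ × Bool)} (hsum : (l.map Prod.fst).sum = t)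
    (σ : Equiv.Perm (Fin (t + 1))) : σ ∈ ScriptS t l ↔ expandRuns l = ascentWord ⇑σ⁻¹ := by
  have hsign : ∀ (ε : Bool) (k k' : Fin (t + 1)), k < k' →
      ((if ε = true then σ⁻¹ k < σ⁻¹ k' else σ⁻¹ k' < σ⁻¹ k) ↔ decide (σ⁻¹ k < σ⁻¹ k') = ε) :=
    fun ε _ _ hkk' => ite_lt_iff_decide_lt_eq (σ⁻¹.injective.ne hkk'.ne) ε
  constructor
  · intro h
    refine ext_getElem? fun k => ?_
    rcases lt_or_ge k t with hk | hk
    · obtain ⟨j, rfl⟩ : ∃ j : Fin t, (j : ℕ) = k := ⟨⟨k, hk⟩, rfl⟩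
      obtain ⟨i, hi, hij, hji⟩ := exists_partialSum_le_lt l (k := j) (by omega)
      have hj := h i hi j.castSucc j.succ hij (by simp) (by simpa using hji)
      rw [getElem?_expandRuns hi hij hji, getElem?_ascentWord,
        (hsign _ _ _ Fin.castSucc_lt_succ).mp hj]
    · rw [getElem?_eq_none (by rw [length_expandRuns]; omega),
        getElem?_eq_none (by rw [length_ascentWord]; omega)]
  · intro h i hi k k' hik hkk' hk'i
    rw [hsign _ k k' hkk']
    exact decide_lt_eq_of_ascentWord σ⁻¹.injective
      (fun j hij hji => h ▸ getElem?_expandRuns hi hij hji) hik hkk' hk'i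

/-- For `t ≥ 1`, the sets `𝒮(γ)`, for `γ` ranging over the reduced elements of `Γ^t`,
partition the symmetric group on `{0,1,…,t}`: every permutation belongs to `𝒮(γ)` for
exactly one reduced `γ ∈ Γ^t`. -/
theorem ScriptS_partition (t : ℕ) (ht : 1 ≤ t) (σ : Equiv.Perm (Fin (t + 1))) :
    ∃! l : List (ℕ × Bool), (InGamma t l ∧ GammaReduced l) ∧ σ ∈ ScriptS t l := by
  refine (existsUnique_congr fun l => ?_).mpr
    (existsUnique_gammaReduced_expandRuns_eq (ascentWord ⇑σ⁻¹))
  constructor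
  · rintro ⟨⟨⟨-, hsum⟩, hred⟩, hσ⟩
    exact ⟨hred, (mem_ScriptS_iff hsum σ).mp hσ⟩
  · rintro ⟨hred, hl⟩
    have hsum : (l.map Prod.fst).sum = t := by
      rw [← length_expandRuns, hl, length_ascentWord]
    have hne : l ≠ [] := by
      rintro rfl
      simp only [map_nil, sum_nil] at hsum
      omega
    exact ⟨⟨⟨hne, hsum⟩, hred⟩, (mem_ScriptS_iff hsum σ).mpr hl⟩
end

section
/- Let O be a discrete valuation ring with uniformizer π, fraction field K and residue field k = O/(π), let V be a finite-dimensional K-vector space, let G be a group and ρ : G → GL(V) a representation. Let L ⊆ V be a G-stable lattice (a finitely generated O-submodule of V that spans V over K and satisfies ρ(g)L = L for all g ∈ G) and assume that the only G-stable O-submodules L'' with πL ⊆ L'' ⊆ L are πL and L itself (i.e. the reduction L/πL is a simple module under the induced G-action). Then every G-stable lattice L' ⊆ V is homothetic to L: there exists c ∈ K^× with L' = c·L. -/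
/-!
Rescale `L'` by some `c ∈ Kˣ` so that `c • L' ≤ L` but `c • L' ≰ π • L`: clearing denominators
puts a multiple of `L'` inside `L`, and Krull's intersection theorem `⨅ n, πⁿ • L = ⊥` bounds the
power of `π` that can still be divided out. Then `c • L' ⊔ π • L` is a `G`-stable module between
`π • L` and `L` different from `π • L`, so it is `L`, and Nakayama's lemma gives `c • L' = L`.
-/

/-- A `G`-stable lattice in a finite-dimensional `K`-vector space `V`, where `K` is the
fraction field of a discrete valuation ring `O`: a finitely generated `O`-submodule of
`V` which spans `V` over `K` and is mapped onto itself by every `ρ g`. -/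
def IsStableLattice {O K V G : Type*} [CommRing O] [Field K] [Algebra O K]
    [AddCommGroup V] [Module K V] [Module O V] [IsScalarTower O K V]
    [Group G] (ρ : G →* (V ≃ₗ[K] V)) (L : Submodule O V) : Prop :=
  L.FG ∧ Submodule.span K (L : Set V) = ⊤ ∧
    ∀ g : G, L.map ((ρ g).toLinearMap.restrictScalars O) = L

open Pointwise Submodule nonZeroDivisors

section Units

variable {R M α : Type*} [Semiring R] [AddCommMonoid M] [Module R M]
  [Monoid α] [DistribMulAction α M] [SMulCommClass α R M]

theorem Submodule.units_smul_le_iff_le_inv_smul (u : αˣ) {N P : Submodule R M} :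
    u • N ≤ P ↔ N ≤ u⁻¹ • P where
  mp h := (inv_smul_smul u N).symm.trans_le (smul_le_smul_left (u⁻¹ : αˣ).val h)
  mpr h := (smul_le_smul_left u.val h).trans_eq (smul_inv_smul u P)

end Units

theorem Submodule.iInf_pow_smul_eq_bot_of_fg {R M : Type*} [CommRing R] [IsDomain R]
    [IsNoetherianRing R] [AddCommGroup M] [Module R M] [Module.IsTorsionFree R M]
    {I : Ideal R} (hI : I ≠ ⊤) {N : Submodule R M} (hN : N.FG) :
    ⨅ n : ℕ, I ^ n • N = ⊥ := by
  have : Module.Finite R N := Module.Finite.iff_fg.mpr hN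
  refine eq_bot_iff.mpr fun x hx => ?_
  have hxN : x ∈ N := by simpa using (mem_iInf _).mp hx 0
  have hx' : (⟨x, hxN⟩ : N) ∈ ⨅ n : ℕ, I ^ n • (⊤ : Submodule R N) :=
    (mem_iInf _).mpr fun n => (mem_smul_top_iff _ N _).mpr ((mem_iInf _).mp hx n)
  rw [I.iInf_pow_smul_eq_bot_of_isTorsionFree hI, mem_bot] at hx'
  simpa using congrArg Subtype.val hx'

section Lattice

variable {O K V : Type*} [CommRing O] [Field K] [Algebra O K]
  [AddCommGroup V] [Module K V] [Module O V] [IsScalarTower O K V]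

theorem Submodule.units_smul_eq_smul_of_coe_eq {c : Kˣ} {a : O} (h : (c : K) = algebraMap O K a)
    (N : Submodule O V) : c • N = a • N := by
  refine SetLike.coe_injective (Set.image_congr fun x _ => ?_)
  simp [h]

theorem Submodule.map_restrictScalars_units_smul {W : Type*} [AddCommGroup W] [Module K W]
    [Module O W] [IsScalarTower O K W] (f : V →ₗ[K] W) (c : Kˣ) (N : Submodule O V) :
    (c • N).map (f.restrictScalars O) = c • N.map (f.restrictScalars O) := by
  refine SetLike.coe_injective ?_
  simp only [map_coe]
  exact Set.image_smul_comm _ _ _ fun x => by simp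

variable [IsFractionRing O K]

theorem Submodule.exists_smul_mem_of_span_eq_top {L : Submodule O V}
    (hL : span K (L : Set V) = ⊤) (v : V) : ∃ a ∈ O⁰, a • v ∈ L := by
  have := isLocalizedModule_id O⁰ V K
  have hv : v ∈ L.localized' K O⁰ LinearMap.id := by
    rw [localized'_eq_span, LinearMap.id_coe, Set.image_id, hL]; trivial
  obtain ⟨m, hm, s, rfl⟩ := hv
  exact ⟨s, s.2, by rwa [← Submonoid.smul_def, IsLocalizedModule.mk'_cancel']⟩

theorem Submodule.exists_smul_le_of_fg {L : Submodule O V}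
    (hL : span K (L : Set V) = ⊤) {N : Submodule O V} (hN : N.FG) :
    ∃ a ∈ O⁰, a • N ≤ L := by
  induction N, hN using fg_induction with
  | singleton v =>
    obtain ⟨a, ha, hav⟩ := exists_smul_mem_of_span_eq_top hL v
    exact ⟨a, ha, by rwa [smul_span, Set.smul_set_singleton, span_singleton_le_iff_mem]⟩
  | sup N₁ N₂ _ _ ih₁ ih₂ =>
    obtain ⟨a₁, ha₁, h₁⟩ := ih₁
    obtain ⟨a₂, ha₂, h₂⟩ := ih₂
    refine ⟨a₂ * a₁, mul_mem ha₂ ha₁, ?_⟩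
    rw [smul_sup', mul_smul, mul_comm, mul_smul]
    exact sup_le ((smul_le_smul_left a₂ h₁).trans (smul_le_self_of_tower a₂ L))
      ((smul_le_smul_left a₁ h₂).trans (smul_le_self_of_tower a₁ L))

theorem Submodule.exists_units_smul_le_and_not_le_smul [IsDomain O] [IsNoetherianRing O]
    {π : O} (hπ0 : π ≠ 0) (hπ : ¬IsUnit π) {L L' : Submodule O V} (hL : L.FG)
    (hLspan : span K (L : Set V) = ⊤) (hL' : L'.FG) (hL'0 : L' ≠ ⊥) :
    ∃ c : Kˣ, c • L' ≤ L ∧ ¬c • L' ≤ π • L := by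
  have := Module.IsTorsionFree.trans_faithfulSMul O K V
  have hinj := IsFractionRing.injective O K
  obtain ⟨a, ha, haL'⟩ := exists_smul_le_of_fg hLspan hL'
  set α : Kˣ := Units.mk0 (algebraMap O K a)
    ((map_ne_zero_iff _ hinj).mpr (nonZeroDivisors.ne_zero ha))
  set ϖ : Kˣ := Units.mk0 (algebraMap O K π) ((map_ne_zero_iff _ hinj).mpr hπ0)
  have hϖ : ∀ n : ℕ, ϖ ^ n • L = (Ideal.span {π}) ^ n • L := fun n => by
    rw [Ideal.span_singleton_pow, ideal_span_singleton_smul]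
    exact units_smul_eq_smul_of_coe_eq (by simp [ϖ]) L
  have hkrull : ⨅ n : ℕ, ϖ ^ n • L = ⊥ := by
    simp only [hϖ]
    exact iInf_pow_smul_eq_bot_of_fg (by rwa [Ne, Ideal.span_singleton_eq_top]) hL
  set M := α • L'
  have hM0 : M ≠ ⊥ := by
    rwa [Ne, ← le_bot_iff, units_smul_le_iff_le_inv_smul, Units.smul_def, smul_bot', le_bot_iff]
  obtain ⟨k, hk, hk'⟩ := Nat.exists_not_and_succ_of_not_zero_of_exists
    (p := fun n => ¬M ≤ ϖ ^ n • L)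
    (by simpa [M, units_smul_eq_smul_of_coe_eq (c := α) rfl] using haL')
    (by by_contra! h; exact hM0 (eq_bot_iff.mpr (hkrull ▸ le_iInf h)))
  rw [not_not] at hk
  refine ⟨(ϖ ^ k)⁻¹ * α, ?_, ?_⟩
  · rwa [mul_smul, units_smul_le_iff_le_inv_smul, inv_inv]
  · rwa [mul_smul, units_smul_le_iff_le_inv_smul, inv_inv,
      ← units_smul_eq_smul_of_coe_eq (c := ϖ) rfl, ← mul_smul, ← pow_succ]

end Lattice

theorem Submodule.le_of_le_sup_smul {R M : Type*} [CommRing R] [IsLocalRing R]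
    [AddCommGroup M] [Module R M] {π : R} (hπ : ¬IsUnit π) {N L : Submodule R M} (hL : L.FG)
    (h : L ≤ N ⊔ π • L) : L ≤ N := by
  refine le_of_le_smul_of_le_jacobson_bot hL ?_ (by rwa [ideal_span_singleton_smul])
  rw [IsLocalRing.jacobson_eq_maximalIdeal ⊥ bot_ne_top, Ideal.span_le, Set.singleton_subset_iff]
  exact hπ

theorem stable_lattice_unique_up_to_homothety_general
    {O K V G : Type*} [CommRing O] [IsDomain O] [IsDiscreteValuationRing O]
    [Field K] [Algebra O K] [IsFractionRing O K]
    [AddCommGroup V] [Module K V]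
    [Module O V] [IsScalarTower O K V]
    [Group G] (ρ : G →* (V ≃ₗ[K] V))
    (π : O) (hπ : Irreducible π)
    (L : Submodule O V) (hL : IsStableLattice ρ L)
    (hsimple : ∀ L'' : Submodule O V,
      (∀ g : G, L''.map ((ρ g).toLinearMap.restrictScalars O) = L'') →
      L.map (LinearMap.lsmul O V π) ≤ L'' → L'' ≤ L →
      L'' = L.map (LinearMap.lsmul O V π) ∨ L'' = L)
    (L' : Submodule O V) (hL' : IsStableLattice ρ L') :
    ∃ c : Kˣ, L' = L.map ((LinearMap.lsmul K V (c : K)).restrictScalars O) := by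
  rcases subsingleton_or_nontrivial V with hV | hV
  · exact ⟨1, Subsingleton.elim _ _⟩
  obtain ⟨hLfg, hLspan, hLstable⟩ := hL
  obtain ⟨hL'fg, hL'span, hL'stable⟩ := hL'
  have hL'0 : L' ≠ ⊥ := by
    rintro rfl
    simp at hL'span
  obtain ⟨c, hle, hnle⟩ :=
    exists_units_smul_le_and_not_le_smul hπ.ne_zero hπ.not_isUnit hLfg hLspan hL'fg hL'0
  have hstable : ∀ g : G, (c • L' ⊔ π • L).map ((ρ g).toLinearMap.restrictScalars O) =
      c • L' ⊔ π • L := fun g => by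
    rw [Submodule.map_sup, map_restrictScalars_units_smul, map_pointwise_smul, hL'stable, hLstable]
  rcases hsimple _ hstable le_sup_right (sup_le hle (smul_le_self_of_tower π L)) with h | h
  · exact absurd (le_sup_left.trans h.le) hnle
  · refine ⟨c⁻¹, ?_⟩
    show L' = c⁻¹ • L
    rw [← le_antisymm hle (le_of_le_sup_smul hπ.not_isUnit hLfg h.ge), inv_smul_smul]

/-- Let `O` be a discrete valuation ring with uniformizer `π` and fraction field `K`,
`V` a finite-dimensional `K`-vector space with a representation `ρ : G → GL(V)`, and
`L ⊆ V` a `G`-stable lattice such that the only `G`-stable `O`-submodules `L''` with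
`πL ⊆ L'' ⊆ L` are `πL` and `L` (i.e. `L/πL` is simple).  Then every `G`-stable lattice
`L' ⊆ V` is homothetic to `L`: there is `c ∈ K^×` with `L' = c·L`. -/
theorem stable_lattice_unique_up_to_homothety
    {O K V G : Type*} [CommRing O] [IsDomain O] [IsDiscreteValuationRing O]
    [Field K] [Algebra O K] [IsFractionRing O K]
    [AddCommGroup V] [Module K V] [FiniteDimensional K V]
    [Module O V] [IsScalarTower O K V]
    [Group G] (ρ : G →* (V ≃ₗ[K] V))
    (π : O) (hπ : Irreducible π)
    (L : Submodule O V) (hL : IsStableLattice ρ L)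
    (hsimple : ∀ L'' : Submodule O V,
      (∀ g : G, L''.map ((ρ g).toLinearMap.restrictScalars O) = L'') →
      L.map (LinearMap.lsmul O V π) ≤ L'' → L'' ≤ L →
      L'' = L.map (LinearMap.lsmul O V π) ∨ L'' = L)
    (L' : Submodule O V) (hL' : IsStableLattice ρ L') :
    ∃ c : Kˣ, L' = L.map ((LinearMap.lsmul K V (c : K)).restrictScalars O) :=
  stable_lattice_unique_up_to_homothety_general ρ π hπ L hL hsimple L' hL'
end

section
/- Let O be a discrete valuation ring with uniformizer π, fraction field K, let V and W be finite-dimensional K-vector spaces carrying representations of a group G, let L_V ⊆ V and L_W ⊆ W be G-stable lattices, and let L denote the image of L_V ⊗_O L_W in V ⊗_K W (a G-stable lattice for the diagonal action of G). Assume that the only G-stable O-submodules between πL and L are πL and L itself (i.e. L/πL is simple under the diagonal G-action). Then every G-stable lattice of V ⊗_K W for the diagonal action is of the form c·L for some c ∈ K^×; in particular every G-stable lattice of V ⊗_K W is, up to scalar, the tensor product of a G-stable lattice of V with a G-stable lattice of W. -/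
/-!
Scale a stable lattice `L'` by `π ^ n`, with `n` the least integer such that `π ^ n • L' ⊆ L`.
It exists because some power of `π` pushes either lattice into the other, while by Nakayama's
lemma no nonzero finitely generated `O`-module is stable under `π⁻¹`. Minimality means
`π ^ n • L' ⊄ π • L`, so the stable module `π ^ n • L' + π • L` between `π • L` and `L` is `L`,
and Nakayama's lemma again gives `π ^ n • L' = L`.
-/

open TensorProduct

/-- The image of `L_V ⊗_O L_W` in `V ⊗_K W`: the `O`-submodule generated by the
elementary tensors `x ⊗ y` with `x ∈ L_V`, `y ∈ L_W`. -/
noncomputable def tensorLattice {O K V W : Type*} [CommRing O] [Field K] [Algebra O K]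
    [AddCommGroup V] [Module K V] [Module O V] [IsScalarTower O K V]
    [AddCommGroup W] [Module K W] [Module O W] [IsScalarTower O K W]
    (LV : Submodule O V) (LW : Submodule O W) : Submodule O (V ⊗[K] W) :=
  Submodule.span O (Set.image2 (fun x y => x ⊗ₜ[K] y) (LV : Set V) (LW : Set W))

open Pointwise

section StableSubmodule

variable {O K E G : Type*} [CommRing O] [Field K] [Algebra O K]
  [AddCommGroup E] [Module K E] [Module O E] [IsScalarTower O K E] [Monoid G]

-- `Kˣ` acts on submodules through its action on `E` and through `K`; instance search does not
-- identify the two, so the monotonicity instance has to be restated for `Kˣ`.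
instance Submodule.covariantClass_units_smul_le :
    CovariantClass Kˣ (Submodule O E) HSMul.hSMul LE.le :=
  Submodule.instCovariantClassHSMulLe

theorem Submodule.units_smul_eq_map_lsmul {a : O} {c : Kˣ} (h : algebraMap O K a = c)
    (M : Submodule O E) : c • M = M.map (LinearMap.lsmul O E a) := by
  change M.map (DistribSMul.toLinearMap O E c) = _
  congr 1
  ext x
  simp [Units.smul_def, ← h]

theorem Submodule.units_smul_le_self {a : O} {c : Kˣ} (h : algebraMap O K a = c)
    (M : Submodule O E) : c • M ≤ M := by
  rw [Submodule.units_smul_eq_map_lsmul h]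
  rintro _ ⟨x, hx, rfl⟩
  exact M.smul_mem a hx

def IsStableSubmodule (ρ : G →* (E ≃ₗ[K] E)) (L : Submodule O E) : Prop :=
  ∀ g : G, L.map ((ρ g).toLinearMap.restrictScalars O) = L

variable {ρ : G →* (E ≃ₗ[K] E)} {L N : Submodule O E}

theorem IsStableSubmodule.sup (hL : IsStableSubmodule ρ L) (hN : IsStableSubmodule ρ N) :
    IsStableSubmodule ρ (L ⊔ N) := fun g => by
  rw [Submodule.map_sup, hL g, hN g]

theorem IsStableSubmodule.units_smul (hL : IsStableSubmodule ρ L) (c : Kˣ) :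
    IsStableSubmodule ρ (c • L) := by
  intro g
  change (L.map (DistribSMul.toLinearMap O E c)).map _ = L.map (DistribSMul.toLinearMap O E c)
  conv_rhs => rw [← hL g]
  simp only [← Submodule.map_comp]
  congr 1
  ext x
  simp [Units.smul_def]

end StableSubmodule

section LocalRing

variable {O K E : Type*} [CommRing O] [IsLocalRing O] [Field K] [Algebra O K]
  [AddCommGroup E] [Module K E] [Module O E] [IsScalarTower O K E] {π : O} {ϖ : Kˣ}

theorem Submodule.le_of_le_sup_units_smul (hπ : π ∈ IsLocalRing.maximalIdeal O)
    (hϖ : algebraMap O K π = ϖ) {M N : Submodule O E} (hM : M.FG) (h : M ≤ N ⊔ ϖ • M) :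
    M ≤ N := by
  refine Submodule.le_of_le_smul_of_le_jacobson_bot hM (I := Ideal.span {π}) ?_ ?_
  · rwa [IsLocalRing.jacobson_eq_maximalIdeal ⊥ bot_ne_top, Ideal.span_singleton_le_iff_mem]
  · rwa [Submodule.ideal_span_singleton_smul,
      show π • M = ϖ • M from (Submodule.units_smul_eq_map_lsmul hϖ M).symm]

theorem Submodule.zpow_smul_le_self_iff (hπ : π ∈ IsLocalRing.maximalIdeal O)
    (hϖ : algebraMap O K π = ϖ) {M : Submodule O E} (hM : M.FG) (hM0 : M ≠ ⊥) (n : ℤ) :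
    ϖ ^ n • M ≤ M ↔ 0 ≤ n := by
  have hpow (k : ℕ) : ϖ ^ (k : ℤ) • M ≤ M := by
    rw [zpow_natCast]
    exact pow_smul_le (Submodule.units_smul_le_self hϖ M) k
  refine ⟨fun h => ?_, fun hn => ?_⟩
  · by_contra hn
    obtain ⟨k, hk⟩ : ∃ k : ℕ, (k : ℤ) = -1 - n := ⟨(-1 - n).toNat, by omega⟩
    have hunit : ϖ * ϖ ^ (k : ℤ) * ϖ ^ n = 1 := by rw [hk]; group
    refine hM0 (eq_bot_iff.mpr (Submodule.le_of_le_sup_units_smul hπ hϖ hM ?_))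
    calc M = ϖ • ϖ ^ (k : ℤ) • ϖ ^ n • M := by rw [smul_smul, smul_smul, hunit, one_smul]
      _ ≤ ϖ • ϖ ^ (k : ℤ) • M := smul_le_smul_left _ (smul_le_smul_left _ h)
      _ ≤ ϖ • M := smul_le_smul_left _ (hpow k)
      _ = ⊥ ⊔ ϖ • M := (bot_sup_eq _).symm
  · lift n to ℕ using hn
    exact hpow n

end LocalRing

section DiscreteValuationRing

variable {O K E : Type*} [CommRing O] [IsDomain O] [IsDiscreteValuationRing O]
  [Field K] [Algebra O K] [IsFractionRing O K]
  [AddCommGroup E] [Module K E] [Module O E] [IsScalarTower O K E] {π : O} {ϖ : Kˣ}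

theorem exists_pow_smul_mem (hπ : Irreducible π) {B : Submodule O E}
    (hB : Submodule.span K (B : Set E) = ⊤) (x : E) : ∃ n : ℕ, π ^ n • x ∈ B := by
  have hx : x ∈ Submodule.span K (B : Set E) := hB ▸ Submodule.mem_top
  obtain ⟨y, hy, z, rfl⟩ := (IsLocalization.mem_span_iff (nonZeroDivisors O)).mp hx
  obtain ⟨n, w, hz⟩ :=
    IsDiscreteValuationRing.eq_unit_mul_pow_irreducible (nonZeroDivisors.ne_zero z.2) hπ
  set x := IsLocalization.mk' K (1 : O) z • y
  have hzx : (z : O) • x = y := by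
    rw [← IsScalarTower.algebraMap_smul K (z : O), smul_smul, IsLocalization.mk'_spec', map_one,
      one_smul]
  have hπx : π ^ n • x = (↑w⁻¹ : O) • y := by
    rw [← hzx, hz, smul_smul, ← mul_assoc, Units.inv_mul, one_mul]
  exact ⟨n, hπx ▸ B.smul_mem _ (by simpa using hy)⟩

theorem exists_pow_smul_le (hπ : Irreducible π) (hϖ : algebraMap O K π = ϖ)
    {A B : Submodule O E} (hA : A.FG) (hB : Submodule.span K (B : Set E) = ⊤) :
    ∃ n : ℕ, ϖ ^ n • A ≤ B := by
  let f : ℕ → Submodule O E := fun n => B.comap (LinearMap.lsmul O E (π ^ n))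
  have hf : Monotone f := monotone_nat_of_le_succ fun n x hx => by
    simpa [f, pow_succ', mul_smul] using B.smul_mem π hx
  have hA_le : A ≤ sSup (Set.range f) := fun x _ => by
    obtain ⟨n, hn⟩ := exists_pow_smul_mem hπ hB x
    exact Submodule.mem_sSup_of_mem (Set.mem_range_self n) hn
  obtain ⟨_, ⟨n, rfl⟩, hn⟩ :=
    (CompleteLattice.isCompactElement_iff_le_of_directed_sSup_le _ A).mp
      ((Submodule.fg_iff_compact A).mp hA) _ (Set.range_nonempty f)
      hf.directed_le.directedOn_range hA_le
  refine ⟨n, ?_⟩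
  rw [Submodule.units_smul_eq_map_lsmul (a := π ^ n) (by simp [hϖ]),
    Submodule.map_le_iff_le_comap]
  exact hn

theorem exists_units_smul_le_and_not_le_smul (hπ : Irreducible π) (hϖ : algebraMap O K π = ϖ)
    {M L : Submodule O E} (hM : M.FG) (hM_span : Submodule.span K (M : Set E) = ⊤)
    (hL : L.FG) (hL_span : Submodule.span K (L : Set E) = ⊤) (hL0 : L ≠ ⊥) :
    ∃ c : Kˣ, c • L ≤ M ∧ ¬ c • L ≤ ϖ • M := by
  obtain ⟨n₀, hn₀⟩ := exists_pow_smul_le hπ hϖ hL hM_span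
  obtain ⟨m, hm⟩ := exists_pow_smul_le hπ hϖ hM hL_span
  have hbdd (n : ℤ) (hn : ϖ ^ n • L ≤ M) : -(m : ℤ) ≤ n := by
    have : ϖ ^ ((m : ℤ) + n) • L ≤ L := by
      rw [zpow_add, mul_smul, zpow_natCast]
      exact (smul_le_smul_left _ hn).trans hm
    have := (Submodule.zpow_smul_le_self_iff hπ.not_isUnit hϖ hL hL0 _).mp this
    omega
  obtain ⟨n, hn, hmin⟩ := Int.exists_least_of_bdd ⟨-m, hbdd⟩ ⟨n₀, by rwa [zpow_natCast]⟩
  refine ⟨ϖ ^ n, hn, fun h => ?_⟩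
  have : ϖ ^ (n - 1) • L ≤ M :=
    calc ϖ ^ (n - 1) • L = ϖ⁻¹ • ϖ ^ n • L := by rw [zpow_sub_one, mul_comm, mul_smul]
      _ ≤ ϖ⁻¹ • ϖ • M := smul_le_smul_left _ h
      _ = M := inv_smul_smul ϖ M
  linarith [hmin _ this]

theorem IsStableLattice.eq_units_smul_of_simple {G : Type*} [Group G] {ρ : G →* (E ≃ₗ[K] E)}
    (hπ : Irreducible π) (hϖ : algebraMap O K π = ϖ) {M L : Submodule O E}
    (hM : IsStableLattice ρ M)
    (hsimple : ∀ N : Submodule O E, IsStableSubmodule ρ N → ϖ • M ≤ N → N ≤ M →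
      N = ϖ • M ∨ N = M)
    (hL : IsStableLattice ρ L) : ∃ c : Kˣ, L = c • M := by
  obtain hE | hE := subsingleton_or_nontrivial E
  · exact ⟨1, Subsingleton.elim _ _⟩
  have hL0 : L ≠ ⊥ := fun h => by simpa [h] using hL.2.1
  obtain ⟨c, hcM, hcϖM⟩ :=
    exists_units_smul_le_and_not_le_smul hπ hϖ hM.1 hM.2.1 hL.1 hL.2.1 hL0
  have hstable : IsStableSubmodule ρ (c • L ⊔ ϖ • M) :=
    (IsStableSubmodule.units_smul hL.2.2 c).sup (IsStableSubmodule.units_smul hM.2.2 ϖ)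
  rcases hsimple _ hstable le_sup_right (sup_le hcM (Submodule.units_smul_le_self hϖ M))
    with h | h
  · exact absurd (le_sup_left.trans h.le) hcϖM
  · exact ⟨c⁻¹, eq_inv_smul_iff.mpr
      (le_antisymm hcM (Submodule.le_of_le_sup_units_smul hπ.not_isUnit hϖ hM.1 h.ge))⟩

end DiscreteValuationRing

section TensorLattice

variable {O K V W V' W' : Type*} [CommRing O] [Field K] [Algebra O K]
  [AddCommGroup V] [Module K V] [Module O V] [IsScalarTower O K V]
  [AddCommGroup W] [Module K W] [Module O W] [IsScalarTower O K W]
  [AddCommGroup V'] [Module K V'] [Module O V'] [IsScalarTower O K V']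
  [AddCommGroup W'] [Module K W'] [Module O W'] [IsScalarTower O K W']
  (LV : Submodule O V) (LW : Submodule O W)

theorem tensorLattice_eq_map₂ : tensorLattice (K := K) LV LW =
    Submodule.map₂ ((TensorProduct.mk K V W).restrictScalars₁₂ O O) LV LW := by
  rw [Submodule.map₂_eq_span_image2]
  rfl

theorem tensorLattice_fg (hV : LV.FG) (hW : LW.FG) : (tensorLattice (K := K) LV LW).FG := by
  rw [tensorLattice_eq_map₂]
  exact hV.map₂ _ hW

theorem span_tensorLattice (hV : Submodule.span K (LV : Set V) = ⊤)
    (hW : Submodule.span K (LW : Set W) = ⊤) :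
    Submodule.span K (tensorLattice (K := K) LV LW : Set (V ⊗[K] W)) = ⊤ := by
  rw [tensorLattice, Submodule.span_span_of_tower]
  refine (Submodule.map₂_span_span K (TensorProduct.mk K V W) _ _).symm.trans ?_
  rw [hV, hW, TensorProduct.map₂_mk_top_top_eq_top]

theorem tensorLattice_map (f : V →ₗ[K] V') (g : W →ₗ[K] W') :
    (tensorLattice LV LW).map ((TensorProduct.map f g).restrictScalars O) =
      tensorLattice (LV.map (f.restrictScalars O)) (LW.map (g.restrictScalars O)) := by
  rw [tensorLattice, tensorLattice, Submodule.map_span, Set.image_image2, Submodule.map_coe,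
    Submodule.map_coe, Set.image2_image_left, Set.image2_image_right]
  simp only [LinearMap.coe_restrictScalars, TensorProduct.map_tmul]

theorem IsStableLattice.tensorLattice {G : Type*} [Group G] {ρV : G →* (V ≃ₗ[K] V)}
    {ρW : G →* (W ≃ₗ[K] W)} {ρ : G →* ((V ⊗[K] W) ≃ₗ[K] (V ⊗[K] W))}
    (hρ : ∀ g : G, ρ g = TensorProduct.congr (ρV g) (ρW g))
    (hV : IsStableLattice ρV LV) (hW : IsStableLattice ρW LW) :
    IsStableLattice ρ (tensorLattice LV LW) :=
  ⟨tensorLattice_fg LV LW hV.1 hW.1, span_tensorLattice LV LW hV.2.1 hW.2.1, fun g => by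
    rw [hρ g, TensorProduct.toLinearMap_congr, tensorLattice_map, hV.2.2 g, hW.2.2 g]⟩

end TensorLattice

theorem tensor_stable_lattice_unique_up_to_homothety_general
    {O K V W G : Type*} [CommRing O] [IsDomain O] [IsDiscreteValuationRing O]
    [Field K] [Algebra O K] [IsFractionRing O K]
    [AddCommGroup V] [Module K V]
    [Module O V] [IsScalarTower O K V]
    [AddCommGroup W] [Module K W]
    [Module O W] [IsScalarTower O K W]
    [Group G] (ρV : G →* (V ≃ₗ[K] V)) (ρW : G →* (W ≃ₗ[K] W))
    (ρ : G →* ((V ⊗[K] W) ≃ₗ[K] (V ⊗[K] W)))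
    (hρ : ∀ g : G, ρ g = TensorProduct.congr (ρV g) (ρW g))
    (π : O) (hπ : Irreducible π)
    (LV : Submodule O V) (hLV : IsStableLattice ρV LV)
    (LW : Submodule O W) (hLW : IsStableLattice ρW LW)
    (hsimple : ∀ L'' : Submodule O (V ⊗[K] W),
      (∀ g : G, L''.map ((ρ g).toLinearMap.restrictScalars O) = L'') →
      (tensorLattice LV LW).map (LinearMap.lsmul O (V ⊗[K] W) π) ≤ L'' →
      L'' ≤ tensorLattice LV LW →
      L'' = (tensorLattice LV LW).map (LinearMap.lsmul O (V ⊗[K] W) π) ∨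
        L'' = tensorLattice LV LW) :
    ∀ L' : Submodule O (V ⊗[K] W), IsStableLattice ρ L' →
      (∃ c : Kˣ,
        L' = (tensorLattice LV LW).map
          ((LinearMap.lsmul K (V ⊗[K] W) (c : K)).restrictScalars O)) ∧
      (∃ (ΓV : Submodule O V) (ΓW : Submodule O W) (c : Kˣ),
        IsStableLattice ρV ΓV ∧ IsStableLattice ρW ΓW ∧
        L' = (tensorLattice ΓV ΓW).map
          ((LinearMap.lsmul K (V ⊗[K] W) (c : K)).restrictScalars O)) := by
  intro L' hL'
  have hπK : algebraMap O K π ≠ 0 :=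
    (map_ne_zero_iff _ (IsFractionRing.injective O K)).mpr hπ.ne_zero
  have hϖM : Units.mk0 _ hπK • tensorLattice LV LW =
      (tensorLattice LV LW).map (LinearMap.lsmul O (V ⊗[K] W) π) :=
    Submodule.units_smul_eq_map_lsmul rfl _
  obtain ⟨c, hc⟩ := (IsStableLattice.tensorLattice LV LW hρ hLV hLW).eq_units_smul_of_simple hπ
    rfl (fun N hN => hϖM ▸ hsimple N hN) hL'
  exact ⟨⟨c, hc⟩, LV, LW, c, hLV, hLW, hc⟩

/-- Let `O` be a discrete valuation ring with uniformizer `π` and fraction field `K`,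
let `V`, `W` be finite-dimensional `K`-vector spaces with representations of a group
`G`, let `L_V`, `L_W` be `G`-stable lattices and let `L` be the image of `L_V ⊗_O L_W`
in `V ⊗_K W`, a `G`-stable lattice for the diagonal action `ρ` of `G`.  If the only
`G`-stable `O`-submodules between `πL` and `L` are `πL` and `L` (i.e. `L/πL` is simple),
then every `G`-stable lattice of `V ⊗_K W` for the diagonal action is of the form `c·L`
with `c ∈ K^×`; in particular every `G`-stable lattice of `V ⊗_K W` is, up to scalar,
the tensor product of a `G`-stable lattice of `V` with a `G`-stable lattice of `W`. -/
theorem tensor_stable_lattice_unique_up_to_homothety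
    {O K V W G : Type*} [CommRing O] [IsDomain O] [IsDiscreteValuationRing O]
    [Field K] [Algebra O K] [IsFractionRing O K]
    [AddCommGroup V] [Module K V] [FiniteDimensional K V]
    [Module O V] [IsScalarTower O K V]
    [AddCommGroup W] [Module K W] [FiniteDimensional K W]
    [Module O W] [IsScalarTower O K W]
    [Group G] (ρV : G →* (V ≃ₗ[K] V)) (ρW : G →* (W ≃ₗ[K] W))
    (ρ : G →* ((V ⊗[K] W) ≃ₗ[K] (V ⊗[K] W)))
    (hρ : ∀ g : G, ρ g = TensorProduct.congr (ρV g) (ρW g))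
    (π : O) (hπ : Irreducible π)
    (LV : Submodule O V) (hLV : IsStableLattice ρV LV)
    (LW : Submodule O W) (hLW : IsStableLattice ρW LW)
    (hsimple : ∀ L'' : Submodule O (V ⊗[K] W),
      (∀ g : G, L''.map ((ρ g).toLinearMap.restrictScalars O) = L'') →
      (tensorLattice LV LW).map (LinearMap.lsmul O (V ⊗[K] W) π) ≤ L'' →
      L'' ≤ tensorLattice LV LW →
      L'' = (tensorLattice LV LW).map (LinearMap.lsmul O (V ⊗[K] W) π) ∨
        L'' = tensorLattice LV LW) :
    ∀ L' : Submodule O (V ⊗[K] W), IsStableLattice ρ L' →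
      (∃ c : Kˣ,
        L' = (tensorLattice LV LW).map
          ((LinearMap.lsmul K (V ⊗[K] W) (c : K)).restrictScalars O)) ∧
      (∃ (ΓV : Submodule O V) (ΓW : Submodule O W) (c : Kˣ),
        IsStableLattice ρV ΓV ∧ IsStableLattice ρW ΓW ∧
        L' = (tensorLattice ΓV ΓW).map
          ((LinearMap.lsmul K (V ⊗[K] W) (c : K)).restrictScalars O)) :=
  tensor_stable_lattice_unique_up_to_homothety_general ρV ρW ρ hρ π hπ LV hLV LW hLW hsimple
end
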